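/- arXiv:2604.18766 — 7 statements merged into one kernel-verified Lean document; each statement's English description precedes it below -/
import Mathlib

section
/- Soundness of L_1^0 with respect to its five-valued non-deterministic matrix: for every set of formulas Γ and formula α, if Γ ⊢_{L_1^0} α then Γ ⊨_{M_1^0} α. -/
/-!
On first coordinates every valuation computes ∧, ∨, → as in the two-element Boolean algebra,
so the positive axioms are tautologies and modus ponens preserves designation. The remaining
axioms are checked on the five values: (TND) is the constraint x₁ ∨ x₂ = 1 defining B; ∘x has
first coordinate ~(x₁ ∧ x₂), which gives (bc1) and (ciw); and iterating ∘ three times sends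
every triple to T.
-/

/-- Formulas of the language with ¬, ∘, ∧, ∨, →. -/
inductive Fm : Type
  | atom : Nat → Fm
  | neg : Fm → Fm
  | circ : Fm → Fm
  | conj : Fm → Fm → Fm
  | disj : Fm → Fm → Fm
  | impl : Fm → Fm → Fm

/-- Derivability from premises in the Hilbert calculus
L₁⁰ = mbCciw + (cc¹) ∘∘∘α, with modus ponens as the only rule. -/
inductive L10 (Γ : Set Fm) : Fm → Prop
  | prem {α : Fm} : α ∈ Γ → L10 Γ α
  | a1 (α β : Fm) : L10 Γ (α.impl (β.impl α))
  | a2 (α β γ : Fm) : L10 Γ ((α.impl (β.impl γ)).impl ((α.impl β).impl (α.impl γ)))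
  | a3 (α β : Fm) : L10 Γ ((α.conj β).impl α)
  | a4 (α β : Fm) : L10 Γ ((α.conj β).impl β)
  | a5 (α β : Fm) : L10 Γ (α.impl (β.impl (α.conj β)))
  | a6 (α β : Fm) : L10 Γ (α.impl (α.disj β))
  | a7 (α β : Fm) : L10 Γ (β.impl (α.disj β))
  | a8 (α β γ : Fm) : L10 Γ ((α.impl γ).impl ((β.impl γ).impl ((α.disj β).impl γ)))
  | a9 (α β : Fm) : L10 Γ (α.disj (α.impl β))
  | tnd (α : Fm) : L10 Γ (α.disj α.neg)
  | bc1 (α β : Fm) : L10 Γ (α.circ.impl (α.impl (α.neg.impl β)))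
  | ciw (α : Fm) : L10 Γ (α.circ.disj (α.conj α.neg))
  | cc1 (α : Fm) : L10 Γ α.circ.circ.circ
  | mp {α β : Fm} : L10 Γ (α.impl β) → L10 Γ α → L10 Γ β

/-- Snapshots: triples of Booleans. -/
abbrev Trip := Bool × Bool × Bool

/-- The five-element domain B = {x : x₁∨x₂=1 and x₃∨~(x₁∧x₂)=1}. -/
def inB (x : Trip) : Prop := (x.1 || x.2.1) = true ∧ (x.2.2 || !(x.1 && x.2.1)) = true

/-- The (deterministic) multioperation for ∘ in the swap structure. -/
def circOp (x : Trip) : Trip := (!(x.1 && x.2.1), x.2.2, x.2.2 && !(x.1 && x.2.1))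

/-- Valuations over the non-deterministic matrix M₁⁰. -/
structure Val10 (h : Fm → Trip) : Prop where
  mem : ∀ φ : Fm, inB (h φ)
  hconj : ∀ α β : Fm, (h (α.conj β)).1 = ((h α).1 && (h β).1)
  hdisj : ∀ α β : Fm, (h (α.disj β)).1 = ((h α).1 || (h β).1)
  himpl : ∀ α β : Fm, (h (α.impl β)).1 = (!(h α).1 || (h β).1)
  hneg : ∀ α : Fm, (h α.neg).1 = (h α).2.1
  hcirc : ∀ α : Fm, h α.circ = circOp (h α)

/-- Semantical consequence w.r.t. M₁⁰ (designated values: first coordinate 1). -/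
def NmCons10 (Γ : Set Fm) (α : Fm) : Prop :=
  ∀ h : Fm → Trip, Val10 h → (∀ γ ∈ Γ, (h γ).1 = true) → (h α).1 = true

theorem circOp_circOp_circOp (x : Trip) : circOp (circOp (circOp x)) = (true, false, false) := by
  revert x
  decide

namespace Val10

variable {h : Fm → Trip}

theorem impl_designated_iff (hv : Val10 h) {α β : Fm} :
    (h (α.impl β)).1 = true ↔ ((h α).1 = true → (h β).1 = true) := by
  rw [hv.himpl]
  cases (h α).1 <;> simp

theorem tnd_designated (hv : Val10 h) (α : Fm) : (h (α.disj α.neg)).1 = true := by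
  rw [hv.hdisj, hv.hneg]
  exact (hv.mem α).1

theorem bc1_designated (hv : Val10 h) (α β : Fm) :
    (h (α.circ.impl (α.impl (α.neg.impl β)))).1 = true := by
  simp only [hv.impl_designated_iff, hv.hcirc, hv.hneg, circOp]
  intro hconsistent hα hnα
  simp [hα, hnα] at hconsistent

theorem ciw_designated (hv : Val10 h) (α : Fm) :
    (h (α.circ.disj (α.conj α.neg))).1 = true := by
  rw [hv.hdisj, hv.hconj, hv.hneg, hv.hcirc]
  exact Bool.not_or_self _

theorem cc1_designated (hv : Val10 h) (α : Fm) : (h α.circ.circ.circ).1 = true := by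
  rw [hv.hcirc, hv.hcirc, hv.hcirc, circOp_circOp_circOp]

end Val10

/-- Soundness of L₁⁰ with respect to M₁⁰. -/
theorem stmt1 (Γ : Set Fm) (α : Fm) : L10 Γ α → NmCons10 Γ α := by
  intro hd h hv hΓ
  induction hd with
  | prem hmem => exact hΓ _ hmem
  | mp _ _ ih₁ ih₂ => exact hv.impl_designated_iff.mp ih₁ ih₂
  | tnd α => exact hv.tnd_designated α
  | bc1 α β => exact hv.bc1_designated α β
  | ciw α => exact hv.ciw_designated α
  | cc1 α => exact hv.cc1_designated α
  | a1 | a2 | a3 | a4 | a5 | a6 | a7 | a8 | a9 =>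
    simp only [hv.himpl, hv.hconj, hv.hdisj]
    grind
end

section
/- Let Γ ∪ {α} be a set of formulas such that Γ is maximal non-trivial with respect to α in L_1^0. Then the mapping ϑ from formulas to {0,1} defined by ϑ(β)=1 if and only if β∈Γ is an L_1^0-bivaluation, i.e. it satisfies clauses (vAnd), (vOr), (vImp), (vNeg), (vConCiw) and (vCc¹). -/
/-- Γ is maximal non-trivial with respect to α in L₁⁰. -/
def MaxNonTrivial (Γ : Set Fm) (α : Fm) : Prop :=
  ¬ L10 Γ α ∧ ∀ β : Fm, β ∉ Γ → L10 (insert β Γ) α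

/-- L₁⁰-bivaluations. -/
structure Bival10 (ϑ : Fm → Bool) : Prop where
  vAnd : ∀ α β : Fm, ϑ (α.conj β) = true ↔ (ϑ α = true ∧ ϑ β = true)
  vOr : ∀ α β : Fm, ϑ (α.disj β) = true ↔ (ϑ α = true ∨ ϑ β = true)
  vImp : ∀ α β : Fm, ϑ (α.impl β) = true ↔ (ϑ α = false ∨ ϑ β = true)
  vNeg : ∀ α : Fm, ϑ α.neg = false → ϑ α = true
  vConCiw : ∀ α : Fm, ϑ α.circ = true ↔ (ϑ α = false ∨ ϑ α.neg = false)
  vCc1 : ∀ α : Fm, ϑ α.circ.circ.neg = true ↔ ϑ α.circ.circ = false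

/-!
A set `Γ` that is maximal non-trivial with respect to `α` is closed under derivability: if
`Γ ⊢ φ` with `φ ∉ Γ`, then `Γ ∪ {φ} ⊢ α` and cutting `φ` gives `Γ ⊢ α`. By the deduction
theorem, `β ∉ Γ` even yields `Γ ⊢ β → α`, so with axiom `a8` the set is prime: a disjunction
lies in `Γ` only if a disjunct does. Each clause of a bivaluation is then read off from the
axiom matching the connective; `a9`, `tnd` and `ciw` supply the cases where a formula must lie
in `Γ`, `bc1` the case where `Γ` would become trivial, and `cc1` makes `∘∘β` consistent, so
that `¬∘∘β` behaves classically.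
-/

namespace L10

theorem impl_self (Γ : Set Fm) (β : Fm) : L10 Γ (β.impl β) :=
  mp (mp (a2 β (β.impl β) β) (a1 β (β.impl β))) (a1 β β)

theorem deduction {Γ : Set Fm} {β φ : Fm} (h : L10 (insert β Γ) φ) :
    L10 Γ (β.impl φ) := by
  induction h with
  | @prem γ hγ =>
    rcases hγ with rfl | hγ
    · exact impl_self Γ γ
    · exact mp (a1 _ _) (prem hγ)
  | @mp γ δ _ _ ih₁ ih₂ => exact mp (mp (a2 β γ δ) ih₁) ih₂
  | a1 => exact mp (a1 _ _) (a1 _ _)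
  | a2 => exact mp (a1 _ _) (a2 _ _ _)
  | a3 => exact mp (a1 _ _) (a3 _ _)
  | a4 => exact mp (a1 _ _) (a4 _ _)
  | a5 => exact mp (a1 _ _) (a5 _ _)
  | a6 => exact mp (a1 _ _) (a6 _ _)
  | a7 => exact mp (a1 _ _) (a7 _ _)
  | a8 => exact mp (a1 _ _) (a8 _ _ _)
  | a9 => exact mp (a1 _ _) (a9 _ _)
  | tnd => exact mp (a1 _ _) (tnd _)
  | bc1 => exact mp (a1 _ _) (bc1 _ _)
  | ciw => exact mp (a1 _ _) (ciw _)
  | cc1 => exact mp (a1 _ _) (cc1 _)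

theorem mp₂ {Γ : Set Fm} {β γ δ : Fm} (h : L10 Γ (β.impl (γ.impl δ))) (hβ : L10 Γ β)
    (hγ : L10 Γ γ) : L10 Γ δ :=
  mp (mp h hβ) hγ

end L10

namespace MaxNonTrivial

variable {Γ : Set Fm} {α : Fm}

theorem impl_derivable_of_not_mem (hmax : MaxNonTrivial Γ α) {β : Fm} (hβ : β ∉ Γ) :
    L10 Γ (β.impl α) :=
  L10.deduction (hmax.2 β hβ)

theorem mem_of_derivable (hmax : MaxNonTrivial Γ α) {φ : Fm} (hφ : L10 Γ φ) : φ ∈ Γ := by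
  by_contra hφΓ
  exact hmax.1 (L10.mp (hmax.impl_derivable_of_not_mem hφΓ) hφ)

theorem mem_or_mem_of_disj_mem (hmax : MaxNonTrivial Γ α) {β γ : Fm}
    (h : β.disj γ ∈ Γ) : β ∈ Γ ∨ γ ∈ Γ := by
  by_contra! hn
  exact hmax.1 (L10.mp (L10.mp₂ (L10.a8 β γ α) (hmax.impl_derivable_of_not_mem hn.1)
    (hmax.impl_derivable_of_not_mem hn.2)) (L10.prem h))

theorem conj_mem_iff (hmax : MaxNonTrivial Γ α) (β γ : Fm) :
    β.conj γ ∈ Γ ↔ β ∈ Γ ∧ γ ∈ Γ :=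
  ⟨fun h => ⟨hmax.mem_of_derivable (L10.mp (L10.a3 β γ) (L10.prem h)),
      hmax.mem_of_derivable (L10.mp (L10.a4 β γ) (L10.prem h))⟩,
    fun ⟨hβ, hγ⟩ => hmax.mem_of_derivable (L10.mp₂ (L10.a5 β γ) (L10.prem hβ) (L10.prem hγ))⟩

theorem disj_mem_iff (hmax : MaxNonTrivial Γ α) (β γ : Fm) :
    β.disj γ ∈ Γ ↔ β ∈ Γ ∨ γ ∈ Γ := by
  refine ⟨hmax.mem_or_mem_of_disj_mem, ?_⟩
  rintro (hβ | hγ)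
  · exact hmax.mem_of_derivable (L10.mp (L10.a6 β γ) (L10.prem hβ))
  · exact hmax.mem_of_derivable (L10.mp (L10.a7 β γ) (L10.prem hγ))

theorem impl_mem_iff (hmax : MaxNonTrivial Γ α) (β γ : Fm) :
    β.impl γ ∈ Γ ↔ β ∉ Γ ∨ γ ∈ Γ := by
  constructor
  · intro h
    by_cases hβ : β ∈ Γ
    · exact Or.inr (hmax.mem_of_derivable (L10.mp (L10.prem h) (L10.prem hβ)))
    · exact Or.inl hβ
  · rintro (hβ | hγ)
    · exact (hmax.mem_or_mem_of_disj_mem (hmax.mem_of_derivable (L10.a9 β γ))).resolve_left hβ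
    · exact hmax.mem_of_derivable (L10.mp (L10.a1 γ β) (L10.prem hγ))

theorem mem_or_neg_mem (hmax : MaxNonTrivial Γ α) (β : Fm) : β ∈ Γ ∨ β.neg ∈ Γ :=
  hmax.mem_or_mem_of_disj_mem (hmax.mem_of_derivable (L10.tnd β))

theorem not_mem_or_neg_not_mem_of_circ_mem (hmax : MaxNonTrivial Γ α) {β : Fm}
    (h : β.circ ∈ Γ) : β ∉ Γ ∨ β.neg ∉ Γ := by
  by_contra! hn
  exact hmax.1 (L10.mp₂ (L10.mp (L10.bc1 β α) (L10.prem h)) (L10.prem hn.1) (L10.prem hn.2))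

theorem circ_mem_iff (hmax : MaxNonTrivial Γ α) (β : Fm) :
    β.circ ∈ Γ ↔ β ∉ Γ ∨ β.neg ∉ Γ := by
  refine ⟨hmax.not_mem_or_neg_not_mem_of_circ_mem, fun h => ?_⟩
  rcases hmax.mem_or_mem_of_disj_mem (hmax.mem_of_derivable (L10.ciw β)) with hcirc | hboth
  · exact hcirc
  · rw [hmax.conj_mem_iff] at hboth
    exact absurd hboth (not_and_or.mpr h)

theorem neg_mem_iff_of_circ_mem (hmax : MaxNonTrivial Γ α) {β : Fm} (h : β.circ ∈ Γ) :
    β.neg ∈ Γ ↔ β ∉ Γ :=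
  ⟨fun hneg hβ => (hmax.not_mem_or_neg_not_mem_of_circ_mem h).elim (· hβ) (· hneg),
    (hmax.mem_or_neg_mem β).resolve_left⟩

theorem neg_circ_circ_mem_iff (hmax : MaxNonTrivial Γ α) (β : Fm) :
    β.circ.circ.neg ∈ Γ ↔ β.circ.circ ∉ Γ :=
  hmax.neg_mem_iff_of_circ_mem (hmax.mem_of_derivable (L10.cc1 β))

end MaxNonTrivial

/-- The characteristic map of a set Γ that is maximal non-trivial w.r.t. α in L₁⁰
is an L₁⁰-bivaluation. -/
theorem stmt2 (Γ : Set Fm) (α : Fm) (hmax : MaxNonTrivial Γ α)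
    (ϑ : Fm → Bool) (hϑ : ∀ β : Fm, ϑ β = true ↔ β ∈ Γ) : Bival10 ϑ := by
  have hϑf : ∀ β : Fm, ϑ β = false ↔ β ∉ Γ := fun β => by
    simp [← hϑ]
  refine ⟨fun β γ => ?_, fun β γ => ?_, fun β γ => ?_, fun β => ?_, fun β => ?_, fun β => ?_⟩
  · simpa only [hϑ] using hmax.conj_mem_iff β γ
  · simpa only [hϑ] using hmax.disj_mem_iff β γ
  · simpa only [hϑ, hϑf] using hmax.impl_mem_iff β γ
  · simpa only [hϑ, hϑf] using (hmax.mem_or_neg_mem β).resolve_right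
  · simpa only [hϑ, hϑf] using hmax.circ_mem_iff β
  · simpa only [hϑ, hϑf] using hmax.neg_circ_circ_mem_iff β
end

section
/- Representation theorem for L_1^0: given any L_1^0-bivaluation ϑ, the function h defined on formulas by h(α) = (ϑ(α), ϑ(¬α), ϑ(¬∘α)) takes values in the five-element domain B, is a valuation over the non-deterministic matrix M_1^0, and satisfies ϑ(α)=1 if and only if h(α) is designated, for every formula α. -/
/-! Each clause of a bivaluation determines ϑ on a compound formula as a Boolean function of
its parts, which gives the first components of h. The only non-trivial component is the third
one of h(∘α): (vCc¹) together with (vConCiw) for ∘α yields ϑ(¬∘∘α) = ϑ(∘α) ∧ ϑ(¬∘α), which is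
the third component of ∘h(α). Membership in B is (vNeg) applied to α and to ∘α. -/

namespace Bival10

variable {ϑ : Fm → Bool} (hϑ : Bival10 ϑ)
include hϑ

theorem conj_eq (α β : Fm) : ϑ (α.conj β) = (ϑ α && ϑ β) :=
  Bool.eq_iff_iff.2 (by simpa using hϑ.vAnd α β)

theorem disj_eq (α β : Fm) : ϑ (α.disj β) = (ϑ α || ϑ β) :=
  Bool.eq_iff_iff.2 (by simpa using hϑ.vOr α β)

theorem impl_eq (α β : Fm) : ϑ (α.impl β) = (!ϑ α || ϑ β) :=
  Bool.eq_iff_iff.2 (by simpa using hϑ.vImp α β)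

theorem circ_eq (α : Fm) : ϑ α.circ = !(ϑ α && ϑ α.neg) :=
  Bool.eq_iff_iff.2 (by simpa [or_iff_not_imp_left] using hϑ.vConCiw α)

theorem or_neg_eq_true (α : Fm) : (ϑ α || ϑ α.neg) = true := by
  cases hneg : ϑ α.neg
  · simpa using hϑ.vNeg α hneg
  · simp

theorem neg_circ_circ_eq (α : Fm) : ϑ α.circ.circ.neg = (ϑ α.circ && ϑ α.circ.neg) := by
  have h : ϑ α.circ.circ.neg = !ϑ α.circ.circ :=
    Bool.eq_iff_iff.2 (by simpa using hϑ.vCc1 α)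
  rw [h, hϑ.circ_eq α.circ, Bool.not_not]

theorem val10_snapshot : Val10 fun α => (ϑ α, ϑ α.neg, ϑ α.circ.neg) where
  mem α := by
    refine ⟨hϑ.or_neg_eq_true α, ?_⟩
    simpa [hϑ.circ_eq, Bool.or_comm] using hϑ.or_neg_eq_true α.circ
  hconj := hϑ.conj_eq
  hdisj := hϑ.disj_eq
  himpl := hϑ.impl_eq
  hneg _ := rfl
  hcirc α := by
    simp only [circOp, hϑ.circ_eq α, hϑ.neg_circ_circ_eq α, Bool.and_comm]

end Bival10

/-- Representation theorem: any L₁⁰-bivaluation ϑ induces a valuation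
h(α) = (ϑ(α), ϑ(¬α), ϑ(¬∘α)) over M₁⁰ preserving designation. -/
theorem stmt3 (ϑ : Fm → Bool) (hbi : Bival10 ϑ) (h : Fm → Trip)
    (hdef : ∀ α : Fm, h α = (ϑ α, ϑ α.neg, ϑ α.circ.neg)) :
    (∀ α : Fm, inB (h α)) ∧ Val10 h ∧ (∀ α : Fm, ϑ α = true ↔ (h α).1 = true) := by
  obtain rfl : h = fun α => (ϑ α, ϑ α.neg, ϑ α.circ.neg) := funext hdef
  have hval := hbi.val10_snapshot
  exact ⟨hval.mem, hval, fun _ => Iff.rfl⟩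
end

section
/- Completeness of L_1^0 with respect to its five-valued non-deterministic matrix: for every set of formulas Γ and formula α, if Γ ⊨_{M_1^0} α then Γ ⊢_{L_1^0} α. -/
/-! A non-derivation `Γ ⊬ α` extends to a theory `Δ ⊇ Γ` that is maximal among those not
deriving `α`. Such a `Δ` is closed under derivation, prime, contains `φ` or `¬φ`, and contains `∘φ`
exactly when it does not contain both `φ` and `¬φ`. The canonical valuation sends `φ` to the
membership bits of `φ`, `¬φ` and `¬∘φ`; it lands in `B` and respects every multioperation. For `∘`
the third coordinate is the delicate one: by (cc¹) `∘∘φ ∈ Δ`, so `¬∘∘φ ∈ Δ` iff `∘φ` and `¬∘φ` are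
both in `Δ`, which is exactly the third coordinate `x₃ ∧ ~(x₁ ∧ x₂)` of `∘x`. -/

namespace L10

variable {Γ Δ : Set Fm} {α φ ψ : Fm}

theorem induction_on {P : Fm → Prop} (h : L10 Γ α) (prem : ∀ φ ∈ Γ, P φ)
    (ax : ∀ φ, (∀ Δ, L10 Δ φ) → P φ) (mp : ∀ φ ψ, P (φ.impl ψ) → P φ → P ψ) : P α := by
  induction h with
  | prem hm => exact prem _ hm
  | a1 a b => exact ax _ fun _ => .a1 a b
  | a2 a b c => exact ax _ fun _ => .a2 a b c
  | a3 a b => exact ax _ fun _ => .a3 a b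
  | a4 a b => exact ax _ fun _ => .a4 a b
  | a5 a b => exact ax _ fun _ => .a5 a b
  | a6 a b => exact ax _ fun _ => .a6 a b
  | a7 a b => exact ax _ fun _ => .a7 a b
  | a8 a b c => exact ax _ fun _ => .a8 a b c
  | a9 a b => exact ax _ fun _ => .a9 a b
  | tnd a => exact ax _ fun _ => .tnd a
  | bc1 a b => exact ax _ fun _ => .bc1 a b
  | ciw a => exact ax _ fun _ => .ciw a
  | cc1 a => exact ax _ fun _ => .cc1 a
  | mp _ _ ih₁ ih₂ => exact mp _ _ ih₁ ih₂

theorem mono (hΓΔ : Γ ⊆ Δ) (h : L10 Γ α) : L10 Δ α :=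
  h.induction_on (fun _ hφ => .prem (hΓΔ hφ)) (fun _ hφ => hφ Δ) fun _ _ => .mp

theorem imp_self (Γ : Set Fm) (φ : Fm) : L10 Γ (φ.impl φ) :=
  ((a2 φ (φ.impl φ) φ).mp (a1 φ (φ.impl φ))).mp (a1 φ φ)

theorem deduction_s4 (h : L10 (insert φ Γ) ψ) : L10 Γ (φ.impl ψ) := by
  refine h.induction_on (fun χ hχ => ?_) (fun _ hχ => (a1 _ _).mp (hχ Γ))
    fun _ _ h₁ h₂ => ((a2 _ _ _).mp h₁).mp h₂
  rcases hχ with rfl | hχ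
  · exact imp_self Γ χ
  · exact (a1 _ _).mp (.prem hχ)

theorem exists_mem_of_directedOn {c : Set (Set Fm)} (hc : DirectedOn (· ⊆ ·) c)
    (hne : c.Nonempty) (h : L10 (⋃₀ c) α) : ∃ s ∈ c, L10 s α := by
  obtain ⟨s₀, hs₀⟩ := hne
  refine h.induction_on (P := fun ψ => ∃ s ∈ c, L10 s ψ) (fun φ hφ => ?_)
    (fun _ hφ => ⟨s₀, hs₀, hφ s₀⟩) ?_
  · obtain ⟨s, hs, hφs⟩ := Set.mem_sUnion.mp hφ
    exact ⟨s, hs, .prem hφs⟩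
  · rintro φ ψ ⟨s, hs, hφψ⟩ ⟨t, ht, hφ⟩
    obtain ⟨u, hu, hsu, htu⟩ := hc s hs t ht
    exact ⟨u, hu, (hφψ.mono hsu).mp (hφ.mono htu)⟩

end L10

structure Saturated (Δ : Set Fm) (α : Fm) : Prop where
  not_derives : ¬ L10 Δ α
  derives_insert : ∀ φ ∉ Δ, L10 (insert φ Δ) α

theorem exists_saturated_superset {Γ : Set Fm} {α : Fm} (h : ¬ L10 Γ α) :
    ∃ Δ, Γ ⊆ Δ ∧ Saturated Δ α := by
  obtain ⟨Δ, hΓΔ, ⟨-, hΔ⟩, hmax⟩ := zorn_subset_nonempty {s | Γ ⊆ s ∧ ¬ L10 s α}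
    (fun c hcS hchain hne => by
      refine ⟨⋃₀ c, ⟨?_, fun hder => ?_⟩, fun s hs => Set.subset_sUnion_of_mem hs⟩
      · obtain ⟨s₀, hs₀⟩ := hne
        exact (hcS hs₀).1.trans (Set.subset_sUnion_of_mem hs₀)
      · obtain ⟨s, hs, hsα⟩ := L10.exists_mem_of_directedOn hchain.directedOn hne hder
        exact (hcS hs).2 hsα)
    Γ ⟨subset_rfl, h⟩
  refine ⟨Δ, hΓΔ, hΔ, fun φ hφ => ?_⟩
  by_contra hφα
  exact hφ (hmax ⟨hΓΔ.trans (Set.subset_insert φ Δ), hφα⟩ (Set.subset_insert φ Δ)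
    (Set.mem_insert φ Δ))

namespace Saturated

variable {Δ : Set Fm} {α φ ψ : Fm} (hΔ : Saturated Δ α)
include hΔ

theorem mem_of_derives (h : L10 Δ φ) : φ ∈ Δ := by
  by_contra hφ
  exact hΔ.not_derives ((hΔ.derives_insert φ hφ).deduction_s4.mp h)

theorem mem_of_impl_mem (hφψ : φ.impl ψ ∈ Δ) (hφ : φ ∈ Δ) : ψ ∈ Δ :=
  hΔ.mem_of_derives ((L10.prem hφψ).mp (.prem hφ))

theorem disj_mem_iff : φ.disj ψ ∈ Δ ↔ φ ∈ Δ ∨ ψ ∈ Δ := by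
  refine ⟨fun h => ?_, ?_⟩
  · by_contra! hn
    have hφ := (hΔ.derives_insert φ hn.1).deduction_s4
    have hψ := (hΔ.derives_insert ψ hn.2).deduction_s4
    exact hΔ.not_derives ((((L10.a8 φ ψ α).mp hφ).mp hψ).mp (.prem h))
  · rintro (h | h)
    · exact hΔ.mem_of_derives ((L10.a6 φ ψ).mp (.prem h))
    · exact hΔ.mem_of_derives ((L10.a7 φ ψ).mp (.prem h))

theorem conj_mem_iff : φ.conj ψ ∈ Δ ↔ φ ∈ Δ ∧ ψ ∈ Δ :=
  ⟨fun h => ⟨hΔ.mem_of_derives ((L10.a3 φ ψ).mp (.prem h)),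
      hΔ.mem_of_derives ((L10.a4 φ ψ).mp (.prem h))⟩,
    fun h => hΔ.mem_of_derives (((L10.a5 φ ψ).mp (.prem h.1)).mp (.prem h.2))⟩

theorem impl_mem_iff : φ.impl ψ ∈ Δ ↔ φ ∉ Δ ∨ ψ ∈ Δ := by
  refine ⟨fun h => or_iff_not_imp_left.mpr fun hφ => hΔ.mem_of_impl_mem h (not_not.mp hφ), ?_⟩
  rintro (hφ | hψ)
  · exact (hΔ.disj_mem_iff.mp (hΔ.mem_of_derives (.a9 φ ψ))).resolve_left hφ
  · exact hΔ.mem_of_derives ((L10.a1 ψ φ).mp (.prem hψ))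

theorem mem_or_neg_mem (φ : Fm) : φ ∈ Δ ∨ φ.neg ∈ Δ :=
  hΔ.disj_mem_iff.mp (hΔ.mem_of_derives (.tnd φ))

theorem circ_mem_iff : φ.circ ∈ Δ ↔ ¬(φ ∈ Δ ∧ φ.neg ∈ Δ) := by
  constructor
  · rintro h ⟨hφ, hnφ⟩
    exact hΔ.not_derives ((((L10.bc1 φ α).mp (.prem h)).mp (.prem hφ)).mp (.prem hnφ))
  · intro h
    have hciw := hΔ.disj_mem_iff.mp (hΔ.mem_of_derives (.ciw φ))
    exact hciw.resolve_right fun hc => h (hΔ.conj_mem_iff.mp hc)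

theorem neg_circ_mem_of_mem_of_neg_mem (hφ : φ ∈ Δ) (hnφ : φ.neg ∈ Δ) : φ.circ.neg ∈ Δ :=
  (hΔ.mem_or_neg_mem φ.circ).resolve_left fun h => hΔ.circ_mem_iff.mp h ⟨hφ, hnφ⟩

theorem neg_circ_circ_mem_iff : φ.circ.circ.neg ∈ Δ ↔ φ.circ ∈ Δ ∧ φ.circ.neg ∈ Δ := by
  have hcc := hΔ.circ_mem_iff.mp (hΔ.mem_of_derives (.cc1 φ))
  constructor
  · intro h
    by_contra hn
    exact hcc ⟨hΔ.circ_mem_iff.mpr hn, h⟩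
  · intro h
    exact (hΔ.mem_or_neg_mem _).resolve_left fun hc => hΔ.circ_mem_iff.mp hc h

end Saturated

open Classical in
noncomputable def canonicalVal (Δ : Set Fm) (φ : Fm) : Trip :=
  (decide (φ ∈ Δ), decide (φ.neg ∈ Δ), decide (φ.circ.neg ∈ Δ))

@[simp]
theorem canonicalVal_fst (Δ : Set Fm) (φ : Fm) : (canonicalVal Δ φ).1 = true ↔ φ ∈ Δ := by
  simp [canonicalVal]

theorem Saturated.val10_canonicalVal {Δ : Set Fm} {α : Fm} (hΔ : Saturated Δ α) :
    Val10 (canonicalVal Δ) where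
  mem φ := by
    refine ⟨by simpa [canonicalVal] using hΔ.mem_or_neg_mem φ, ?_⟩
    by_cases h : φ ∈ Δ ∧ φ.neg ∈ Δ
    · simp [canonicalVal, hΔ.neg_circ_mem_of_mem_of_neg_mem h.1 h.2]
    · simpa [canonicalVal] using Or.inr (not_and_or.mp h)
  hconj φ ψ := by rw [Bool.eq_iff_iff]; simp [canonicalVal, hΔ.conj_mem_iff]
  hdisj φ ψ := by rw [Bool.eq_iff_iff]; simp [canonicalVal, hΔ.disj_mem_iff]
  himpl φ ψ := by rw [Bool.eq_iff_iff]; simp [canonicalVal, hΔ.impl_mem_iff]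
  hneg φ := rfl
  hcirc φ := by
    refine Prod.ext ?_ (Prod.ext rfl ?_) <;> rw [Bool.eq_iff_iff] <;>
      simp [canonicalVal, circOp, hΔ.circ_mem_iff, hΔ.neg_circ_circ_mem_iff, imp_iff_not_or,
        and_comm]

/-- Completeness of L₁⁰ with respect to M₁⁰. -/
theorem stmt4 (Γ : Set Fm) (α : Fm) : NmCons10 Γ α → L10 Γ α := by
  intro hsem
  by_contra hnd
  obtain ⟨Δ, hΓΔ, hΔ⟩ := exists_saturated_superset hnd
  have hαΔ : α ∈ Δ := by
    simpa using hsem _ hΔ.val10_canonicalVal fun γ hγ => by simpa using hΓΔ hγ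
  exact hΔ.not_derives (.prem hαΔ)
end

section
/- Soundness and completeness of L_1^2: for every set of formulas Γ and formula α, Γ ⊢_{L_1^2} α if and only if Γ ⊨_{M_1^2} α. -/
/-- Biimplication α↔β := (α→β)∧(β→α). -/
def Fm.biim (a b : Fm) : Fm := (a.impl b).conj (b.impl a)

/-- Derivability from premises in the Hilbert calculus
L₁² = mbCciw + (cc¹) ∘∘∘α + (cf) ¬¬α→α + (ce) α→¬¬α + (ip¹) ¬∘¬α ↔ ¬∘α. -/
inductive L12 (Γ : Set Fm) : Fm → Prop
  | prem {α : Fm} : α ∈ Γ → L12 Γ α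
  | a1 (α β : Fm) : L12 Γ (α.impl (β.impl α))
  | a2 (α β γ : Fm) : L12 Γ ((α.impl (β.impl γ)).impl ((α.impl β).impl (α.impl γ)))
  | a3 (α β : Fm) : L12 Γ ((α.conj β).impl α)
  | a4 (α β : Fm) : L12 Γ ((α.conj β).impl β)
  | a5 (α β : Fm) : L12 Γ (α.impl (β.impl (α.conj β)))
  | a6 (α β : Fm) : L12 Γ (α.impl (α.disj β))
  | a7 (α β : Fm) : L12 Γ (β.impl (α.disj β))
  | a8 (α β γ : Fm) : L12 Γ ((α.impl γ).impl ((β.impl γ).impl ((α.disj β).impl γ)))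
  | a9 (α β : Fm) : L12 Γ (α.disj (α.impl β))
  | tnd (α : Fm) : L12 Γ (α.disj α.neg)
  | bc1 (α β : Fm) : L12 Γ (α.circ.impl (α.impl (α.neg.impl β)))
  | ciw (α : Fm) : L12 Γ (α.circ.disj (α.conj α.neg))
  | cc1 (α : Fm) : L12 Γ α.circ.circ.circ
  | cf (α : Fm) : L12 Γ (α.neg.neg.impl α)
  | ce (α : Fm) : L12 Γ (α.impl α.neg.neg)
  | ip1 (α : Fm) : L12 Γ (Fm.biim α.neg.circ.neg α.circ.neg)
  | mp {α β : Fm} : L12 Γ (α.impl β) → L12 Γ α → L12 Γ β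

/-- The deterministic negation of M₁²: ¬x = (x₂, x₁, x₃). -/
def negOp (x : Trip) : Trip := (x.2.1, x.1, x.2.2)

/-- Valuations over the non-deterministic matrix M₁². -/
structure Val12 (h : Fm → Trip) : Prop where
  mem : ∀ φ : Fm, inB (h φ)
  hconj : ∀ α β : Fm, (h (α.conj β)).1 = ((h α).1 && (h β).1)
  hdisj : ∀ α β : Fm, (h (α.disj β)).1 = ((h α).1 || (h β).1)
  himpl : ∀ α β : Fm, (h (α.impl β)).1 = (!(h α).1 || (h β).1)
  hneg : ∀ α : Fm, h α.neg = negOp (h α)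
  hcirc : ∀ α : Fm, h α.circ = circOp (h α)

/-- Semantical consequence w.r.t. M₁² (designated values: first coordinate 1). -/
def NmCons12 (Γ : Set Fm) (α : Fm) : Prop :=
  ∀ h : Fm → Trip, Val12 h → (∀ γ ∈ Γ, (h γ).1 = true) → (h α).1 = true

namespace L12

variable {Γ Δ : Set Fm} {α β γ : Fm}

theorem trans (hΓ : ∀ γ ∈ Γ, L12 Δ γ) (h : L12 Γ α) : L12 Δ α :=
  h.rec (motive := fun φ _ => L12 Δ φ) (hΓ _ ·) .a1 .a2 .a3 .a4 .a5 .a6 .a7 .a8 .a9 .tnd .bc1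
    .ciw .cc1 .cf .ce .ip1 fun _ _ => .mp

theorem mono (hΓΔ : Γ ⊆ Δ) (h : L12 Γ α) : L12 Δ α :=
  trans (fun _ hγ => .prem (hΓΔ hγ)) h

@[elab_as_elim]
theorem induction_on {motive : Fm → Prop} (h : L12 Γ α)
    (prem : ∀ φ ∈ Γ, motive φ) (thm : ∀ φ, L12 ∅ φ → motive φ)
    (mp : ∀ φ ψ, motive (φ.impl ψ) → motive φ → motive ψ) : motive α :=
  -- the axiom cases are folded into `thm`: every axiom instance is derivable from `∅`
  h.rec (motive := fun φ _ => motive φ) (prem _ ·) (thm _ <| .a1 · ·) (thm _ <| .a2 · · ·)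
    (thm _ <| .a3 · ·) (thm _ <| .a4 · ·) (thm _ <| .a5 · ·) (thm _ <| .a6 · ·)
    (thm _ <| .a7 · ·) (thm _ <| .a8 · · ·) (thm _ <| .a9 · ·) (thm _ <| .tnd ·)
    (thm _ <| .bc1 · ·) (thm _ <| .ciw ·) (thm _ <| .cc1 ·) (thm _ <| .cf ·) (thm _ <| .ce ·)
    (thm _ <| .ip1 ·) fun _ _ => mp _ _

theorem imp_self (Γ : Set Fm) (α : Fm) : L12 Γ (α.impl α) :=
  .mp (.mp (.a2 α (α.impl α) α) (.a1 α (α.impl α))) (.a1 α α)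

theorem imp_intro (h : L12 Γ β) : L12 Γ (α.impl β) :=
  .mp (.a1 β α) h

theorem deduction (h : L12 (insert α Γ) β) : L12 Γ (α.impl β) := by
  refine h.induction_on (fun φ hφ => ?_)
    (fun φ hφ => imp_intro (mono (Set.empty_subset Γ) hφ))
    fun φ ψ ih₁ ih₂ => .mp (.mp (.a2 α φ ψ) ih₁) ih₂
  rcases hφ with rfl | hφ
  · exact imp_self Γ φ
  · exact imp_intro (.prem hφ)

theorem cut (hα : L12 Γ α) (h : L12 (insert α Γ) β) : L12 Γ β :=
  .mp (deduction h) hα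

theorem exists_mem_of_sUnion {c : Set (Set Fm)} (hc : IsChain (· ⊆ ·) c) (hne : c.Nonempty)
    (h : L12 (⋃₀ c) α) : ∃ s ∈ c, L12 s α := by
  refine h.induction_on (fun φ ⟨s, hs, hφ⟩ => ⟨s, hs, .prem hφ⟩)
    (fun φ hφ => ⟨hne.some, hne.some_mem, mono (Set.empty_subset _) hφ⟩) ?_
  rintro φ ψ ⟨s, hs, h₁⟩ ⟨t, ht, h₂⟩
  rcases hc.total hs ht with hst | hts
  · exact ⟨t, ht, .mp (mono hst h₁) h₂⟩
  · exact ⟨s, hs, .mp h₁ (mono hts h₂)⟩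

theorem sound (h : L12 Γ α) : NmCons12 Γ α := by
  intro v hv hΓ
  induction h with
  | prem h => exact hΓ _ h
  | mp _ _ ih₁ ih₂ => simpa [hv.himpl, ih₂] using ih₁
  | _ =>
    -- a truth-table check on first coordinates; (TND) and (cc¹) also need membership in B
    have hB := hv.mem
    simp only [Fm.biim, hv.himpl, hv.hconj, hv.hdisj, hv.hneg, hv.hcirc, negOp, circOp]
    grind [inB]

end L12

structure Saturated_s5 (Δ : Set Fm) (α : Fm) : Prop where
  not_derives : ¬ L12 Δ α
  derives_insert : ∀ β ∉ Δ, L12 (insert β Δ) α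

theorem L12.exists_saturated {Γ : Set Fm} {α : Fm} (h : ¬ L12 Γ α) :
    ∃ Δ, Γ ⊆ Δ ∧ Saturated_s5 Δ α := by
  obtain ⟨Δ, hΓΔ, hmax⟩ := zorn_subset_nonempty {Δ | ¬ L12 Δ α}
    (fun c hcS hc hne => ⟨⋃₀ c, fun hα => by
      obtain ⟨s, hs, hsα⟩ := L12.exists_mem_of_sUnion hc hne hα
      exact hcS hs hsα, fun _ => Set.subset_sUnion_of_mem⟩) Γ h
  refine ⟨Δ, hΓΔ, hmax.prop, fun β hβ => ?_⟩
  by_contra hβα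
  exact hβ (hmax.le_of_ge hβα (Set.subset_insert β Δ) (Set.mem_insert β Δ))

namespace Saturated_s5

variable {Δ : Set Fm} {α β γ : Fm} (hΔ : Saturated_s5 Δ α)
include hΔ

theorem mem_of_derives_s5 (h : L12 Δ β) : β ∈ Δ :=
  by_contra fun hβ => hΔ.not_derives (L12.cut h (hΔ.derives_insert β hβ))

theorem mem_or_mem_of_disj_mem (h : β.disj γ ∈ Δ) : β ∈ Δ ∨ γ ∈ Δ := by
  by_contra! hβγ
  have hβ := L12.deduction (hΔ.derives_insert β hβγ.1)
  have hγ := L12.deduction (hΔ.derives_insert γ hβγ.2)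
  exact hΔ.not_derives (.mp (.mp (.mp (.a8 β γ α) hβ) hγ) (.prem h))

theorem mem_or_neg_mem_s5 (β : Fm) : β ∈ Δ ∨ β.neg ∈ Δ :=
  hΔ.mem_or_mem_of_disj_mem (hΔ.mem_of_derives_s5 (.tnd β))

theorem conj_mem_iff_s5 : β.conj γ ∈ Δ ↔ β ∈ Δ ∧ γ ∈ Δ :=
  ⟨fun h => ⟨hΔ.mem_of_derives_s5 (.mp (.a3 β γ) (.prem h)),
      hΔ.mem_of_derives_s5 (.mp (.a4 β γ) (.prem h))⟩,
    fun ⟨hβ, hγ⟩ => hΔ.mem_of_derives_s5 (.mp (.mp (.a5 β γ) (.prem hβ)) (.prem hγ))⟩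

theorem disj_mem_iff_s5 : β.disj γ ∈ Δ ↔ β ∈ Δ ∨ γ ∈ Δ :=
  ⟨hΔ.mem_or_mem_of_disj_mem, fun h =>
    h.elim (fun hβ => hΔ.mem_of_derives_s5 (.mp (.a6 β γ) (.prem hβ)))
      fun hγ => hΔ.mem_of_derives_s5 (.mp (.a7 β γ) (.prem hγ))⟩

theorem impl_mem_iff_s5 : β.impl γ ∈ Δ ↔ (β ∈ Δ → γ ∈ Δ) := by
  refine ⟨fun h hβ => hΔ.mem_of_derives_s5 (.mp (.prem h) (.prem hβ)), fun h => ?_⟩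
  rcases hΔ.mem_or_mem_of_disj_mem (hΔ.mem_of_derives_s5 (.a9 β γ)) with hβ | hβγ
  · exact hΔ.mem_of_derives_s5 (L12.imp_intro (.prem (h hβ)))
  · exact hβγ

theorem circ_mem_iff_s5 : β.circ ∈ Δ ↔ ¬(β ∈ Δ ∧ β.neg ∈ Δ) := by
  refine ⟨fun h ⟨hβ, hnβ⟩ =>
    hΔ.not_derives (.mp (.mp (.mp (.bc1 β α) (.prem h)) (.prem hβ)) (.prem hnβ)), fun h => ?_⟩
  rcases hΔ.mem_or_mem_of_disj_mem (hΔ.mem_of_derives_s5 (.ciw β)) with hcβ | hβnβ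
  · exact hcβ
  · exact absurd (hΔ.conj_mem_iff_s5.1 hβnβ) h

theorem neg_neg_mem_iff : β.neg.neg ∈ Δ ↔ β ∈ Δ :=
  ⟨fun h => hΔ.mem_of_derives_s5 (.mp (.cf β) (.prem h)),
    fun h => hΔ.mem_of_derives_s5 (.mp (.ce β) (.prem h))⟩

theorem neg_circ_neg_mem_iff : β.neg.circ.neg ∈ Δ ↔ β.circ.neg ∈ Δ :=
  let ⟨h₁, h₂⟩ := hΔ.conj_mem_iff_s5.1 (hΔ.mem_of_derives_s5 (.ip1 β))
  ⟨hΔ.impl_mem_iff_s5.1 h₁, hΔ.impl_mem_iff_s5.1 h₂⟩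

theorem neg_circ_circ_mem_iff_s5 : β.circ.circ.neg ∈ Δ ↔ β.circ ∈ Δ ∧ β.circ.neg ∈ Δ := by
  have hccc : β.circ.circ.circ ∈ Δ := hΔ.mem_of_derives_s5 (.cc1 β)
  rw [← not_not (a := β.circ ∈ Δ ∧ _), ← hΔ.circ_mem_iff_s5]
  refine ⟨fun h hcc => (hΔ.circ_mem_iff_s5.1 hccc) ⟨hcc, h⟩, fun h => ?_⟩
  exact (hΔ.mem_or_neg_mem_s5 β.circ.circ).resolve_left h

end Saturated_s5

theorem Saturated_s5.val12_canonicalVal {Δ : Set Fm} {α : Fm} (hΔ : Saturated_s5 Δ α) :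
    Val12 (canonicalVal Δ) where
  mem φ := by
    have hcirc := (hΔ.mem_or_neg_mem_s5 φ.circ).symm.imp_right (not_and_or.1 ∘ hΔ.circ_mem_iff_s5.1)
    exact ⟨by simpa [canonicalVal] using hΔ.mem_or_neg_mem_s5 φ, by simpa [canonicalVal] using hcirc⟩
  hconj _ _ := by rw [Bool.eq_iff_iff]; simp [canonicalVal, hΔ.conj_mem_iff_s5]
  hdisj _ _ := by rw [Bool.eq_iff_iff]; simp [canonicalVal, hΔ.disj_mem_iff_s5]
  himpl _ _ := by rw [Bool.eq_iff_iff]; simp [canonicalVal, hΔ.impl_mem_iff_s5, imp_iff_not_or]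
  hneg _ := by simp [canonicalVal, negOp, hΔ.neg_neg_mem_iff, hΔ.neg_circ_neg_mem_iff]
  hcirc _ := by
    refine Prod.ext ?_ (Prod.ext rfl ?_) <;> rw [Bool.eq_iff_iff] <;>
      simp [canonicalVal, circOp, hΔ.circ_mem_iff_s5, hΔ.neg_circ_circ_mem_iff_s5, and_comm,
        imp_iff_not_or]

theorem L12.complete {Γ : Set Fm} {α : Fm} (h : NmCons12 Γ α) : L12 Γ α := by
  by_contra hα
  obtain ⟨Δ, hΓΔ, hΔ⟩ := L12.exists_saturated hα
  have := h _ hΔ.val12_canonicalVal fun γ hγ => by simpa [canonicalVal] using hΓΔ hγ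
  exact hΔ.not_derives (.prem (by simpa [canonicalVal] using this))

/-- Soundness and completeness of L₁² with respect to M₁². -/
theorem stmt5 (Γ : Set Fm) (α : Fm) : L12 Γ α ↔ NmCons12 Γ α :=
  ⟨L12.sound, L12.complete⟩
end

section
/- General recovery theorem: let A₁, A₂ be algebras over the signature {¬,∘,∧,∨,→} with A₂ a subalgebra of A₁, D₁ ⊆ A₁, D₂ = D₁ ∩ A₂, and let L₁ = ⟨A₁,D₁⟩, L₂ = ⟨A₂,D₂⟩ be the corresponding matrix logics. Suppose there exists a formula ∘'(p) in the single atom p such that for every valuation ϑ over L₁ and every formula α: ϑ(∘'(α)) ∈ D₁ if and only if ϑ(α) ∈ A₂. Then for every set of formulas Γ and formula α: {∘'(q) : q ∈ Var(Γ∪{α})} ∪ Γ ⊢_{L₁} α if and only if Γ ⊢_{L₂} α. -/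
/-- An algebra over the signature {¬, ∘, ∧, ∨, →}. -/
structure MAlg (A : Type*) where
  neg : A → A
  circ : A → A
  conj : A → A → A
  disj : A → A → A
  impl : A → A → A

/-- The valuation (homomorphism from the formula algebra) extending an atom assignment. -/
def evalM {A : Type*} (M : MAlg A) (v : Nat → A) : Fm → A
  | .atom n => v n
  | .neg a => M.neg (evalM M v a)
  | .circ a => M.circ (evalM M v a)
  | .conj a b => M.conj (evalM M v a) (evalM M v b)
  | .disj a b => M.disj (evalM M v a) (evalM M v b)
  | .impl a b => M.impl (evalM M v a) (evalM M v b)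

/-- S is (the carrier of) a subalgebra: a subset closed under all operations. -/
def ClosedSub {A : Type*} (M : MAlg A) (S : Set A) : Prop :=
  (∀ a ∈ S, M.neg a ∈ S) ∧ (∀ a ∈ S, M.circ a ∈ S) ∧
  (∀ a ∈ S, ∀ b ∈ S, M.conj a b ∈ S) ∧ (∀ a ∈ S, ∀ b ∈ S, M.disj a b ∈ S) ∧
  (∀ a ∈ S, ∀ b ∈ S, M.impl a b ∈ S)

/-- Consequence relation of the matrix logic L₁ = ⟨A, D⟩. -/
def MCons {A : Type*} (M : MAlg A) (D : Set A) (Γ : Set Fm) (ψ : Fm) : Prop :=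
  ∀ v : Nat → A, (∀ γ ∈ Γ, evalM M v γ ∈ D) → evalM M v ψ ∈ D

/-- Consequence relation of the matrix logic L₂ = ⟨A₂, D ∩ A₂⟩, where A₂ is the
subalgebra with carrier S: valuations are homomorphisms taking values in S. -/
def SubCons {A : Type*} (M : MAlg A) (S D : Set A) (Γ : Set Fm) (ψ : Fm) : Prop :=
  ∀ v : Nat → A, (∀ n, v n ∈ S) →
    (∀ γ ∈ Γ, evalM M v γ ∈ D ∩ S) → evalM M v ψ ∈ D ∩ S


/-- Application of a substitution (a map from atoms to formulas) to a formula. -/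
def subst (σ : Nat → Fm) : Fm → Fm
  | .atom n => σ n
  | .neg a => (subst σ a).neg
  | .circ a => (subst σ a).circ
  | .conj a b => (subst σ a).conj (subst σ b)
  | .disj a b => (subst σ a).disj (subst σ b)
  | .impl a b => (subst σ a).impl (subst σ b)

/-- The set of atoms occurring in a formula. -/
def fvars : Fm → Set Nat
  | .atom n => {n}
  | .neg a => fvars a
  | .circ a => fvars a
  | .conj a b => fvars a ∪ fvars b
  | .disj a b => fvars a ∪ fvars b
  | .impl a b => fvars a ∪ fvars b

/-- The set of atoms occurring in a set of formulas. -/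
def varsOf (Γ : Set Fm) : Set Nat := ⋃ γ ∈ Γ, fvars γ

noncomputable def retractInto {A : Type*} (S : Set A) (v : Nat → A) (a : A) : Nat → A :=
  open Classical in fun n => if v n ∈ S then v n else a

/-- The premises `∘'(q)`, `q ∈ X`, where `∘'(p)` is the formula `φ` read as a formula in `p`. -/
def recoveryPremises (φ : Fm) (X : Set Nat) : Set Fm :=
  {ψ | ∃ q ∈ X, ψ = subst (fun _ => Fm.atom q) φ}

section

variable {A : Type*} {M : MAlg A} {S D : Set A}

theorem evalM_congr {v w : Nat → A} (t : Fm) (h : ∀ n ∈ fvars t, v n = w n) :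
    evalM M v t = evalM M w t := by
  induction t with
  | atom n => exact h n rfl
  | neg a ih | circ a ih => simp only [evalM, ih h]
  | conj a b iha ihb | disj a b iha ihb | impl a b iha ihb =>
    simp only [evalM, iha fun n hn => h n (Set.mem_union_left _ hn),
      ihb fun n hn => h n (Set.mem_union_right _ hn)]

theorem evalM_mem_of_closedSub (hS : ClosedSub M S) {v : Nat → A} (hv : ∀ n, v n ∈ S)
    (t : Fm) : evalM M v t ∈ S := by
  obtain ⟨hneg, hcirc, hconj, hdisj, himpl⟩ := hS
  induction t with
  | atom n => exact hv n
  | neg a ih => exact hneg _ ih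
  | circ a ih => exact hcirc _ ih
  | conj a b iha ihb => exact hconj _ iha _ ihb
  | disj a b iha ihb => exact hdisj _ iha _ ihb
  | impl a b iha ihb => exact himpl _ iha _ ihb

theorem fvars_nonempty (t : Fm) : (fvars t).Nonempty := by
  induction t with
  | atom n => exact ⟨n, rfl⟩
  | neg a ih | circ a ih => exact ih
  | conj a b iha ihb | disj a b iha ihb | impl a b iha ihb => exact iha.mono Set.subset_union_left

theorem fvars_subset_varsOf {Γ : Set Fm} {γ : Fm} (hγ : γ ∈ Γ) : fvars γ ⊆ varsOf Γ :=
  Set.subset_biUnion_of_mem hγ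

theorem retractInto_mem {v : Nat → A} {a : A} (ha : a ∈ S) (n : Nat) :
    retractInto S v a n ∈ S := by
  unfold retractInto
  split_ifs with h
  exacts [h, ha]

theorem evalM_retractInto {v : Nat → A} (a : A) {t : Fm} (ht : ∀ n ∈ fvars t, v n ∈ S) :
    evalM M (retractInto S v a) t = evalM M v t :=
  evalM_congr t fun n hn => if_pos (ht n hn)

theorem subCons_of_mCons_recoveryPremises (hS : ClosedSub M S) {φ : Fm}
    (hrec : ∀ (v : Nat → A) q, v q ∈ S → evalM M v (subst (fun _ => Fm.atom q) φ) ∈ D)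
    {X : Set Nat} {Γ : Set Fm} {α : Fm} (h : MCons M D (recoveryPremises φ X ∪ Γ) α) :
    SubCons M S D Γ α := by
  intro v hv hΓ
  refine ⟨h v ?_, evalM_mem_of_closedSub hS hv α⟩
  rintro γ (⟨q, -, rfl⟩ | hγ)
  · exact hrec v q (hv q)
  · exact (hΓ γ hγ).1

/-- A valuation satisfying the premises `∘'(q)` sends every relevant atom into `S`, so its
retraction into `S` is a valuation of the subalgebra that agrees with it on `Γ` and `α`. -/
theorem mCons_recoveryPremises_of_subCons (hS : ClosedSub M S) {φ : Fm}
    (hrec : ∀ (v : Nat → A) q, evalM M v (subst (fun _ => Fm.atom q) φ) ∈ D → v q ∈ S)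
    {Γ : Set Fm} {α : Fm} (h : SubCons M S D Γ α) :
    MCons M D (recoveryPremises φ (varsOf (insert α Γ)) ∪ Γ) α := by
  intro v hv
  have hvars : ∀ q ∈ varsOf (insert α Γ), v q ∈ S := fun q hq =>
    hrec v q (hv _ (Or.inl ⟨q, hq, rfl⟩))
  have hfv : ∀ γ ∈ insert α Γ, ∀ n ∈ fvars γ, v n ∈ S := fun γ hγ n hn =>
    hvars n (fvars_subset_varsOf hγ hn)
  obtain ⟨q₀, hq₀⟩ := fvars_nonempty α
  have hq₀S : v q₀ ∈ S := hfv α (Set.mem_insert α Γ) q₀ hq₀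
  set w := retractInto S v (v q₀)
  have hwΓ : ∀ γ ∈ Γ, evalM M w γ ∈ D ∩ S := fun γ hγ =>
    ⟨(evalM_retractInto _ (hfv γ (Set.mem_insert_of_mem α hγ))).symm ▸ hv γ (Or.inr hγ),
      evalM_mem_of_closedSub hS (retractInto_mem hq₀S) γ⟩
  rw [← evalM_retractInto (v q₀) (hfv α (Set.mem_insert α Γ))]
  exact (h w (retractInto_mem hq₀S) hwΓ).1

end

theorem stmt16_general {A : Type*} (M : MAlg A) (S D : Set A) (hS : ClosedSub M S)
    (φ : Fm)
    (hrec : ∀ (v : Nat → A) (α : Fm),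
      evalM M v (subst (fun _ => α) φ) ∈ D ↔ evalM M v α ∈ S)
    (Γ : Set Fm) (α : Fm) :
    MCons M D
      ({ψ | ∃ q ∈ varsOf (insert α Γ), ψ = subst (fun _ => Fm.atom q) φ} ∪ Γ) α
      ↔ SubCons M S D Γ α :=
  ⟨subCons_of_mCons_recoveryPremises hS (fun v q => (hrec v (.atom q)).mpr),
    mCons_recoveryPremises_of_subCons hS (fun v q => (hrec v (.atom q)).mp)⟩

/-- General recovery theorem: if ∘'(p) is a formula in the single atom p such
that ϑ(∘'(α)) ∈ D₁ iff ϑ(α) ∈ A₂ for every valuation ϑ over L₁ = ⟨A₁,D₁⟩ and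
formula α, then ∘'(Var(Γ∪{α})), Γ ⊢_{L₁} α iff Γ ⊢_{L₂} α, for
L₂ = ⟨A₂, D₁ ∩ A₂⟩ the matrix logic of the subalgebra A₂ (with carrier S). -/
theorem stmt16 {A : Type*} (M : MAlg A) (S D : Set A) (hS : ClosedSub M S)
    (φ : Fm) (hsingle : fvars φ ⊆ {0})
    (hrec : ∀ (v : Nat → A) (α : Fm),
      evalM M v (subst (fun _ => α) φ) ∈ D ↔ evalM M v α ∈ S)
    (Γ : Set Fm) (α : Fm) :
    MCons M D
      ({ψ | ∃ q ∈ varsOf (insert α Γ), ψ = subst (fun _ => Fm.atom q) φ} ∪ Γ) α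
      ↔ SubCons M S D Γ α :=
  stmt16_general M S D hS φ hrec Γ α
end

section
/- For every n ≥ 0 and every formula α, the restricted non-deterministic matrix R_n^0 = ⟨M_0, F_n^0⟩ validates (cc^n): ⊨_{R_n^0} ∘^{n+2}α. -/
/-- Iterated consistency operator: `circN n α` is ∘^n α. -/
def circN : Nat → Fm → Fm
  | 0, a => a
  | n + 1, a => Fm.circ (circN n a)

/-- Snapshots: pairs of Booleans. T=(1,0), t=(1,1), F=(0,1). -/
abbrev Pr := Bool × Bool

/-- The three-element domain B₀ = {x : x₁ ∨ x₂ = 1}. -/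
def inB0 (x : Pr) : Prop := (x.1 || x.2) = true

/-- Valuations over the Nmatrix M₀ for mbCciw (designated values: first coordinate 1). -/
structure Val0 (ϑ : Fm → Pr) : Prop where
  mem : ∀ φ : Fm, inB0 (ϑ φ)
  hconj : ∀ α β : Fm, (ϑ (α.conj β)).1 = ((ϑ α).1 && (ϑ β).1)
  hdisj : ∀ α β : Fm, (ϑ (α.disj β)).1 = ((ϑ α).1 || (ϑ β).1)
  himpl : ∀ α β : Fm, (ϑ (α.impl β)).1 = (!(ϑ α).1 || (ϑ β).1)
  hneg : ∀ α : Fm, (ϑ α.neg).1 = (ϑ α).2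
  hcirc : ∀ α : Fm, (ϑ α.circ).1 = !((ϑ α).1 && (ϑ α).2)

/-- The restriction defining the admissible valuations F_n^0 of the RNmatrix R_n^0:
if ϑ(∘ⁿα) ∈ {T, F} then ϑ(∘ⁿ⁺¹α) = T. -/
def Restr (n : Nat) (ϑ : Fm → Pr) : Prop :=
  ∀ α : Fm, (ϑ (circN n α) = (true, false) ∨ ϑ (circN n α) = (false, true)) →
    ϑ (circN (n + 1) α) = (true, false)

/-!
Every value of `M₀` is `T`, `F` or `t`. If `ϑ(∘ⁿα)` is `T` or `F`, the restriction makes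
`ϑ(∘ⁿ⁺¹α) = T`, and `∘` of a classical value is designated. If `ϑ(∘ⁿα) = t`, then `ϑ(∘ⁿ⁺¹α)`
is undesignated, hence `F`; since `∘ⁿ⁺¹α = ∘ⁿ(∘α)`, the restriction applied to `∘α` gives
`ϑ(∘ⁿ⁺²α) = T`.
-/

lemma circN_circ (n : Nat) (a : Fm) : circN n a.circ = circN (n + 1) a := by
  induction n with
  | zero => rfl
  | succ k ih => rw [circN, ih]; rfl

namespace Val0

variable {ϑ : Fm → Pr}

lemma eq_T_or_eq_F_or_eq_t (hv : Val0 ϑ) (φ : Fm) :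
    ϑ φ = (true, false) ∨ ϑ φ = (false, true) ∨ ϑ φ = (true, true) := by
  have hmem := hv.mem φ
  rcases h : ϑ φ with ⟨_ | _, _ | _⟩ <;> simp_all [inB0]

lemma circ_fst_of_eq_T (hv : Val0 ϑ) {φ : Fm} (h : ϑ φ = (true, false)) :
    (ϑ φ.circ).1 = true := by
  rw [hv.hcirc, h]; rfl

lemma circ_eq_F_of_eq_t (hv : Val0 ϑ) {φ : Fm} (h : ϑ φ = (true, true)) :
    ϑ φ.circ = (false, true) := by
  have hfst : (ϑ φ.circ).1 = false := by rw [hv.hcirc, h]; rfl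
  rcases hv.eq_T_or_eq_F_or_eq_t φ.circ with hT | hF | ht
  · simp [hT] at hfst
  · exact hF
  · simp [ht] at hfst

end Val0

/-- The RNmatrix R_n^0 validates (cc^n) ∘^{n+2}α. -/
theorem stmt17 (n : Nat) (α : Fm) :
    ∀ ϑ : Fm → Pr, Val0 ϑ → Restr n ϑ → (ϑ (circN (n + 2) α)).1 = true := by
  intro ϑ hv hr
  rcases hv.eq_T_or_eq_F_or_eq_t (circN n α) with hT | hF | ht
  · exact hv.circ_fst_of_eq_T (hr α (Or.inl hT))
  · exact hv.circ_fst_of_eq_T (hr α (Or.inr hF))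
  · have hF : ϑ (circN n α.circ) = (false, true) := by
      rw [circN_circ]; exact hv.circ_eq_F_of_eq_t ht
    have hT : ϑ (circN (n + 2) α) = (true, false) :=
      circN_circ (n + 1) α ▸ hr α.circ (Or.inr hF)
    rw [hT]
end
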